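/- Let p be a factorized transition density and assume E-faithfulness holds for every measurable E ⊆ X with μ(E) > 0. Let D ⊆ X be canonical and let E ⊆ X be measurable with μ(D ∩ E) > 0. Then the edge set of the local causal graph G_D is contained in the edge set of G_E. -/
import Mathlib


open MeasureTheory
open scoped ENNReal

namespace FCDL

variable {N M : ℕ}
variable {X : Fin (N + M) → Type*} {Y : Fin N → Type*}
variable [∀ i, MeasurableSpace (X i)] [∀ j, MeasurableSpace (Y j)]

/-- Restriction of `x : ∀ i, X i` to the coordinates in the finite index set `T`. -/
def restr (T : Finset (Fin (N + M))) (x : ∀ i, X i) :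
    (i : {i // i ∈ T}) → X i.val :=
  fun i => x i.val

/-- `pj` is the family of conditional factors of a factorized transition density:
each `pj j` is jointly measurable, strictly positive, and `pj j x ·` is a probability
density with respect to `ν j` for every `x`. -/
structure IsFTD (ν : ∀ j, Measure (Y j)) (pj : ∀ j, (∀ i, X i) → Y j → ℝ) : Prop where
  measurable : ∀ j, Measurable (Function.uncurry (pj j))
  pos : ∀ j x y, 0 < pj j x y
  density : ∀ j x, ∫ y, pj j x y ∂(ν j) = 1

/-- The full factorized transition density `p(x,y) = ∏ j, p_j(x, y_j)`. -/
def Pfull (pj : ∀ j, (∀ i, X i) → Y j → ℝ) (x : ∀ i, X i) (y : ∀ j, Y j) : ℝ :=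
  ∏ j, pj j x (y j)

/-- `T` is a local parent set for output `j` on the context `E`: on `E`, the conditional
density of `Y j` depends on `x` only through the coordinates `x_T`. -/
def IsLPS (μ : Measure (∀ i, X i)) (ν : ∀ j, Measure (Y j))
    (pj : ∀ j, (∀ i, X i) → Y j → ℝ) (E : Set (∀ i, X i)) (j : Fin N)
    (T : Finset (Fin (N + M))) : Prop :=
  ∃ g : ((i : {i // i ∈ T}) → X i.val) → Y j → ℝ,
    Measurable (Function.uncurry g) ∧
    ∀ᵐ x ∂μ, x ∈ E → (∀ᵐ y ∂(ν j), pj j x y = g (restr T x) y)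

/-- `T` is an inclusion-minimal local parent set for `j` on `E`. -/
def IsMinLPS (μ : Measure (∀ i, X i)) (ν : ∀ j, Measure (Y j))
    (pj : ∀ j, (∀ i, X i) → Y j → ℝ) (E : Set (∀ i, X i)) (j : Fin N)
    (T : Finset (Fin (N + M))) : Prop :=
  IsLPS μ ν pj E j T ∧ ∀ T' : Finset (Fin (N + M)), T' ⊂ T → ¬ IsLPS μ ν pj E j T'

/-- `E`-faithfulness: every local parent set for `j` on `E` contains the minimal local
parent set `Pa(j;E)` (so the minimal local parent set is unique). -/
def Faithful (μ : Measure (∀ i, X i)) (ν : ∀ j, Measure (Y j))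
    (pj : ∀ j, (∀ i, X i) → Y j → ℝ) (E : Set (∀ i, X i)) : Prop :=
  ∀ (j : Fin N) (P T : Finset (Fin (N + M))),
    IsMinLPS μ ν pj E j P → IsLPS μ ν pj E j T → P ⊆ T

/-- A bipartite graph from `I` to `J` is encoded by its parent map `j ↦ Pa^G(j)`;
`edgeCount G` is its number of edges `|G|`. -/
def edgeCount (G : Fin N → Finset (Fin (N + M))) : ℕ := ∑ j, (G j).card

/-- Membership in the class `F_E(G)` of strictly positive transition densities which,
on `E`, factorize through the parents prescribed by the graph `G`. -/
def MemF (ν : ∀ j, Measure (Y j)) (E : Set (∀ i, X i))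
    (G : Fin N → Finset (Fin (N + M)))
    (f : (∀ i, X i) → (∀ j, Y j) → ℝ) : Prop :=
  Measurable (Function.uncurry f) ∧
  (∀ x y, 0 < f x y) ∧
  (∀ x, ∫ y, f x y ∂(Measure.pi ν) = 1) ∧
  ∃ fj : ∀ j : Fin N, ((i : {i // i ∈ G j}) → X i.val) → Y j → ℝ,
    (∀ j, Measurable (Function.uncurry (fj j))) ∧
    (∀ j, ∀ x ∈ E, ∫ y, fj j (restr (G j) x) y ∂(ν j) = 1) ∧
    (∀ x ∈ E, ∀ y : ∀ j, Y j, f x y = ∏ j, fj j (restr (G j) x) (y j))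

/-- The conditional probability measure `μ_E = μ(· ∩ E)/μ(E)`. -/
noncomputable def condMeasure (μ : Measure (∀ i, X i)) (E : Set (∀ i, X i)) :
    Measure (∀ i, X i) := (μ E)⁻¹ • μ.restrict E

open Classical in
/-- `KL_E(p, f) = ∫ μ_E(dx) ∫ p(x,y) log (p(x,y)/f(x,y)) ν(dy) ∈ [0,∞]`, with the usual
convention that a non-integrable inner relative entropy is `∞`. -/
noncomputable def klE (μ : Measure (∀ i, X i)) (ν : ∀ j, Measure (Y j))
    (p f : (∀ i, X i) → (∀ j, Y j) → ℝ) (E : Set (∀ i, X i)) : ℝ≥0∞ :=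
  ∫⁻ x, (if Integrable (fun y => p x y * Real.log (p x y / f x y)) (Measure.pi ν)
      then ENNReal.ofReal (∫ y, p x y * Real.log (p x y / f x y) ∂(Measure.pi ν))
      else ⊤) ∂(condMeasure μ E)

/-- A `K`-decomposition: a measurable partition of the state-action space into `K`
cells of positive measure. -/
structure IsDecomp (μ : Measure (∀ i, X i)) {K : ℕ} (E : Fin K → Set (∀ i, X i)) : Prop where
  measurableSet : ∀ z, MeasurableSet (E z)
  pos : ∀ z, 0 < μ (E z)
  disjoint : Pairwise (Function.onFun Disjoint E)
  cover : (⋃ z, E z) = Set.univ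

/-- The regularized maximum-likelihood score `S({G_z, E_z})`, valued in the extended reals. -/
noncomputable def score (μ : Measure (∀ i, X i)) (ν : ∀ j, Measure (Y j))
    (pj : ∀ j, (∀ i, X i) → Y j → ℝ) (lam : ℝ) {K : ℕ}
    (E : Fin K → Set (∀ i, X i)) (G : Fin K → (Fin N → Finset (Fin (N + M)))) : EReal :=
  sSup { r : EReal | ∃ f : Fin K → ((∀ i, X i) → (∀ j, Y j) → ℝ),
      (∀ z, MemF ν (E z) (G z) (f z)) ∧
      r = ((∑ z, ∫ x in E z, ∫ y, Pfull pj x y * Real.log (f z x y)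
              ∂(Measure.pi ν) ∂μ : ℝ) : EReal) }
    - ((lam * ∑ z, (μ (E z)).toReal * (edgeCount (G z) : ℝ) : ℝ) : EReal)

/-- The entropy condition: `p log p` is integrable with respect to `μ ⊗ ν`. -/
def EntropyCond (μ : Measure (∀ i, X i)) (ν : ∀ j, Measure (Y j))
    (pj : ∀ j, (∀ i, X i) → Y j → ℝ) : Prop :=
  Integrable (fun q : (∀ i, X i) × (∀ j, Y j) =>
    Pfull pj q.1 q.2 * Real.log (Pfull pj q.1 q.2)) (μ.prod (Measure.pi ν))

open Classical in
/-- The local causal graph `G_E` (the family of minimal local parent sets), chosen via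
choice; under faithfulness it is the unique minimal local parent set family. -/
noncomputable def theLCG (μ : Measure (∀ i, X i)) (ν : ∀ j, Measure (Y j))
    (pj : ∀ j, (∀ i, X i) → Y j → ℝ) (E : Set (∀ i, X i)) :
    Fin N → Finset (Fin (N + M)) :=
  fun j => if h : ∃ T, IsMinLPS μ ν pj E j T then h.choose else ∅

/-- `η({E_z})`: the minimum over cells `z` of the (normalized) smallest KL gap over
graphs `G'` that miss an edge of `G_{E_z}` and have fewer edges. -/
noncomputable def etaDecomp (μ : Measure (∀ i, X i)) (ν : ∀ j, Measure (Y j))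
    (pj : ∀ j, (∀ i, X i) → Y j → ℝ) {K : ℕ} (E : Fin K → Set (∀ i, X i)) : ℝ≥0∞ :=
  ⨅ z : Fin K, ⨅ G' ∈ {G' : Fin N → Finset (Fin (N + M)) |
      (¬ ∀ j, theLCG μ ν pj (E z) j ⊆ G' j) ∧
        edgeCount G' < edgeCount (theLCG μ ν pj (E z))},
    ENNReal.ofReal (1 / ((N : ℝ) * (N + M) + 1)) *
      ⨅ f ∈ {f | MemF ν (E z) G' f}, klE μ ν (Pfull pj) f (E z)

/-- `η* = inf` of `η({E_z})` over all `K`-decompositions. -/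
noncomputable def etaStar (μ : Measure (∀ i, X i)) (ν : ∀ j, Measure (Y j))
    (pj : ∀ j, (∀ i, X i) → Y j → ℝ) (K : ℕ) : ℝ≥0∞ :=
  ⨅ E ∈ {E : Fin K → Set (∀ i, X i) | IsDecomp μ E}, etaDecomp μ ν pj E

/-- `D` is canonical: every positive-measure measurable subset of `D` has the same
local causal graph as `D`. -/
def Canonical (μ : Measure (∀ i, X i)) (ν : ∀ j, Measure (Y j))
    (pj : ∀ j, (∀ i, X i) → Y j → ℝ) (D : Set (∀ i, X i)) : Prop :=
  ∀ C : Set (∀ i, X i), MeasurableSet C → C ⊆ D → 0 < μ C →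
    ∀ (j : Fin N) (T : Finset (Fin (N + M))),
      IsMinLPS μ ν pj C j T ↔ IsMinLPS μ ν pj D j T


/-- if faithfulness holds everywhere, `D` is canonical and
`μ(D ∩ E) > 0`, then the edge set of `G_D` is contained in that of `G_E`. -/
theorem canonical_lcg_subset
    (hN : 0 < N) (hM : 0 < M)
    [∀ i, StandardBorelSpace (X i)] [∀ j, StandardBorelSpace (Y j)]
    (μ : Measure (∀ i, X i)) [IsProbabilityMeasure μ]
    (ν : ∀ j, Measure (Y j)) [∀ j, SigmaFinite (ν j)]
    (pj : ∀ j, (∀ i, X i) → Y j → ℝ) (hp : IsFTD ν pj)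
    (hfaith : ∀ E : Set (∀ i, X i), MeasurableSet E → 0 < μ E → Faithful μ ν pj E)
    (D : Set (∀ i, X i)) (hD : MeasurableSet D) (hDpos : 0 < μ D)
    (hcan : Canonical μ ν pj D)
    (E : Set (∀ i, X i)) (hE : MeasurableSet E) (hpos : 0 < μ (D ∩ E))
    (PaD PaE : Fin N → Finset (Fin (N + M)))
    (hPaD : ∀ j, IsMinLPS μ ν pj D j (PaD j))
    (hPaE : ∀ j, IsMinLPS μ ν pj E j (PaE j)) :
    ∀ j, PaD j ⊆ PaE j := by
  intro j
  have hmeas : MeasurableSet (D ∩ E) := hD.inter hE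
  -- PaD j is a minimal LPS on D ∩ E by canonicity
  have hminDE : IsMinLPS μ ν pj (D ∩ E) j (PaD j) :=
    (hcan (D ∩ E) hmeas Set.inter_subset_left hpos j (PaD j)).mpr (hPaD j)
  -- PaE j is an LPS on D ∩ E
  have hlpsDE : IsLPS μ ν pj (D ∩ E) j (PaE j) := by
    obtain ⟨g, hg, hae⟩ := (hPaE j).1
    exact ⟨g, hg, hae.mono fun x hx hxDE => hx hxDE.2⟩
  exact hfaith (D ∩ E) hmeas hpos j (PaD j) (PaE j) hminDE hlpsDE

end FCDL
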